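/- arXiv:2402.14772 — 4 statements merged into one kernel-verified Lean document; each statement's English description precedes it below -/
import Mathlib

section
/- Let (K,|·|) be a non-Archimedean valued field, n ∈ ℕ, and let U : K^n → K^n be a linear map with matrix [u_ij] in the canonical basis. The following are equivalent: (1) U is a linear isometry of (K^n,‖·‖), i.e. ‖Ux‖ = ‖x‖ for all x ∈ K^n; (2) |det U| = 1 and max_{1≤i≤n}|u_ij| = 1 for every 1 ≤ j ≤ n; (3) |det U| = 1 and |u_ij| ≤ 1 for all 1 ≤ i,j ≤ n; (4) U is invertible and all entries of U and of U⁻¹ have valuation ≤ 1; (5) U ∈ GL(n,D), i.e. all entries of U lie in D and det U is a unit of D. -/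
/-!
Expanding the determinant by the Leibniz formula and using the ultrametric inequality gives the
non-Archimedean Hadamard bound `|det U| ≤ ∏ⱼ ‖U eⱼ‖`, and a matrix with entries in `D` does not
increase `‖·‖`. Hence if `U` and `U⁻¹` have entries in `D`, both are contractions and `U` is an
isometry. Conversely the columns `U eⱼ` of an isometry have norm `1`, so an isometry and its inverse
have entries in `D`, and `|det U| · |det U⁻¹| = 1` with both factors `≤ 1` forces `|det U| = 1`.
From `|det U| = 1` the formula `U⁻¹ = (det U)⁻¹ • adj U` puts the entries of `U⁻¹` in `D`, and the
Hadamard bound forces every column to have norm exactly `1`.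
-/

open scoped Classical

structure IsNAV {K : Type*} [Field K] (v : K → ℝ) : Prop where
  nonneg : ∀ x, 0 ≤ v x
  eq_zero_iff : ∀ x, v x = 0 ↔ x = 0
  map_mul' : ∀ x y, v (x * y) = v x * v y
  add_le' : ∀ x y, v (x + y) ≤ max (v x) (v y)

def stdNorm {K : Type*} [Field K] (v : K → ℝ) {n : ℕ} (x : Fin n → K) : ℝ :=
  (List.ofFn fun i => v (x i)).foldr max 0

namespace List

variable {α : Type*} [LinearOrder α]

theorem foldr_max_le_iff {l : List α} {b c : α} :
    l.foldr max b ≤ c ↔ b ≤ c ∧ ∀ a ∈ l, a ≤ c := by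
  induction l with
  | nil => simp
  | cons a l ih => simp [ih, and_left_comm]

theorem foldr_max_eq_or_mem (l : List α) (b : α) : l.foldr max b = b ∨ l.foldr max b ∈ l := by
  induction l with
  | nil => simp
  | cons a l ih =>
    rcases max_choice a (l.foldr max b) with h | h <;> rw [foldr_cons, h]
    · exact .inr mem_cons_self
    · exact ih.imp_right (mem_cons_of_mem a)

end List

def IsNAV.absoluteValue {K : Type*} [Field K] {v : K → ℝ} (hv : IsNAV v) : AbsoluteValue K ℝ where
  toFun := v
  map_mul' := hv.map_mul'
  nonneg' := hv.nonneg
  eq_zero' := hv.eq_zero_iff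
  add_le' _ _ := IsNonarchimedean.add_le hv.nonneg hv.add_le'

theorem IsNonarchimedean.apply_sum_le_of_forall_le {R ι : Type*} [Semiring R]
    {abv : AbsoluteValue R ℝ} (hna : IsNonarchimedean abv) {s : Finset ι} {f : ι → R} {c : ℝ}
    (hc : 0 ≤ c) (h : ∀ i ∈ s, abv (f i) ≤ c) : abv (∑ i ∈ s, f i) ≤ c :=
  Finset.sum_induction f (abv · ≤ c) (fun _ _ ha hb => (hna _ _).trans (max_le ha hb))
    (by simpa using hc) h

section stdNorm

variable {K : Type*} [Field K] {n : ℕ}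

theorem stdNorm_le_iff {v : K → ℝ} {x : Fin n → K} {c : ℝ} :
    stdNorm v x ≤ c ↔ 0 ≤ c ∧ ∀ i, v (x i) ≤ c := by
  simp [stdNorm, List.foldr_max_le_iff, List.mem_ofFn]

theorem stdNorm_nonneg (v : K → ℝ) (x : Fin n → K) : 0 ≤ stdNorm v x :=
  (stdNorm_le_iff.1 le_rfl).1

theorem le_stdNorm (v : K → ℝ) (x : Fin n → K) (i : Fin n) : v (x i) ≤ stdNorm v x :=
  (stdNorm_le_iff.1 le_rfl).2 i

theorem exists_apply_eq_stdNorm {v : K → ℝ} {x : Fin n → K} (h : stdNorm v x ≠ 0) :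
    ∃ i, v (x i) = stdNorm v x := by
  simpa [stdNorm, List.mem_ofFn] using
    (List.foldr_max_eq_or_mem (List.ofFn fun i => v (x i)) 0).resolve_left h

variable {abv : AbsoluteValue K ℝ}

theorem stdNorm_eq_zero_iff {x : Fin n → K} : stdNorm abv x = 0 ↔ x = 0 := by
  refine ⟨fun h => funext fun i => abv.eq_zero.1 ?_, fun h => ?_⟩
  · exact le_antisymm (h ▸ le_stdNorm abv x i) (abv.nonneg _)
  · exact le_antisymm (stdNorm_le_iff.2 ⟨le_rfl, by simp [h]⟩) (stdNorm_nonneg _ _)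

theorem stdNorm_single_one (j : Fin n) : stdNorm abv (Pi.single j (1 : K)) = 1 := by
  refine le_antisymm (stdNorm_le_iff.2 ⟨zero_le_one, fun i => ?_⟩) ?_
  · rcases eq_or_ne i j with rfl | hij <;> simp [*]
  · simpa using le_stdNorm abv (Pi.single j (1 : K)) j

end stdNorm

namespace Matrix

variable {K : Type*} [Field K] {abv : AbsoluteValue K ℝ} {n : ℕ}
  {U V : Matrix (Fin n) (Fin n) K}

theorem stdNorm_mulVec_le (hna : IsNonarchimedean abv) (hU : ∀ i j, abv (U i j) ≤ 1)
    (x : Fin n → K) : stdNorm abv (U *ᵥ x) ≤ stdNorm abv x := by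
  refine stdNorm_le_iff.2 ⟨stdNorm_nonneg abv x, fun i => ?_⟩
  rw [mulVec, dotProduct]
  refine hna.apply_sum_le_of_forall_le (stdNorm_nonneg abv x) fun j _ => ?_
  simpa using mul_le_mul (hU i j) (le_stdNorm abv x j) (abv.nonneg _) zero_le_one

theorem abv_apply_le_one_of_isometry (hU : ∀ x, stdNorm abv (U *ᵥ x) = stdNorm abv x)
    (i j : Fin n) : abv (U i j) ≤ 1 := by
  have h := le_stdNorm abv (U *ᵥ Pi.single j 1) i
  rw [hU, stdNorm_single_one] at h
  simpa [mulVec_single] using h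

theorem isometry_of_mul_eq_one (hU : ∀ x, stdNorm abv (U *ᵥ x) = stdNorm abv x)
    (hUV : U * V = 1) (x : Fin n → K) : stdNorm abv (V *ᵥ x) = stdNorm abv x := by
  rw [← hU, mulVec_mulVec, hUV, one_mulVec]

theorem det_ne_zero_of_isometry (hU : ∀ x, stdNorm abv (U *ᵥ x) = stdNorm abv x) :
    U.det ≠ 0 := by
  intro hdet
  obtain ⟨x, hx, hUx⟩ := exists_mulVec_eq_zero_iff.2 hdet
  exact hx (stdNorm_eq_zero_iff.1 (hU x ▸ stdNorm_eq_zero_iff.2 hUx))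

theorem abv_det_le_prod_stdNorm_col (hna : IsNonarchimedean abv) (U : Matrix (Fin n) (Fin n) K) :
    abv U.det ≤ ∏ j, stdNorm abv (fun i => U i j) := by
  rw [det_apply]
  refine hna.apply_sum_le_of_forall_le (Finset.prod_nonneg fun _ _ => stdNorm_nonneg _ _)
    fun σ _ => ?_
  rw [abv.map_units_int_smul, abv.map_prod]
  exact Finset.prod_le_prod (fun _ _ => abv.nonneg _) fun j _ =>
    le_stdNorm abv (fun i => U i j) (σ j)

theorem abv_det_le_stdNorm_col (hna : IsNonarchimedean abv) (hU : ∀ i j, abv (U i j) ≤ 1)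
    (j : Fin n) : abv U.det ≤ stdNorm abv (fun i => U i j) := by
  refine (abv_det_le_prod_stdNorm_col hna U).trans ?_
  rw [← Finset.mul_prod_erase _ _ (Finset.mem_univ j)]
  exact mul_le_of_le_one_right (stdNorm_nonneg _ _) <| Finset.prod_le_one
    (fun _ _ => stdNorm_nonneg _ _) fun k _ => stdNorm_le_iff.2 ⟨zero_le_one, fun i => hU i k⟩

theorem abv_det_le_one (hna : IsNonarchimedean abv) (hU : ∀ i j, abv (U i j) ≤ 1) :
    abv U.det ≤ 1 :=
  (abv_det_le_prod_stdNorm_col hna U).trans <| Finset.prod_le_one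
    (fun _ _ => stdNorm_nonneg _ _) fun k _ => stdNorm_le_iff.2 ⟨zero_le_one, fun i => hU i k⟩

theorem abv_adjugate_apply_le_one (hna : IsNonarchimedean abv) (hU : ∀ i j, abv (U i j) ≤ 1)
    (i j : Fin n) : abv (U.adjugate i j) ≤ 1 := by
  rw [adjugate_apply]
  refine abv_det_le_one hna fun k l => ?_
  rcases eq_or_ne k j with rfl | hkj
  · rcases eq_or_ne l i with rfl | hli <;> simp [*]
  · simpa [hkj] using hU k l

theorem abv_inv_apply_le_one (hna : IsNonarchimedean abv) (hU : ∀ i j, abv (U i j) ≤ 1)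
    (hdet : abv U.det⁻¹ ≤ 1) (i j : Fin n) : abv (U⁻¹ i j) ≤ 1 := by
  rw [inv_def, Ring.inverse_eq_inv', smul_apply, smul_eq_mul, abv.map_mul]
  exact mul_le_one₀ hdet (abv.nonneg _) (abv_adjugate_apply_le_one hna hU i j)

theorem abv_det_eq_one_of_mul_eq_one (hna : IsNonarchimedean abv) (hUV : U * V = 1)
    (hU : ∀ i j, abv (U i j) ≤ 1) (hV : ∀ i j, abv (V i j) ≤ 1) : abv U.det = 1 := by
  have hprod : abv U.det * abv V.det = 1 := by
    rw [← abv.map_mul, ← det_mul, hUV, det_one, abv.map_one]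
  nlinarith [abv_det_le_one hna hU, abv_det_le_one hna hV, abv.nonneg U.det, abv.nonneg V.det]

theorem exists_abv_apply_eq_one (hna : IsNonarchimedean abv) (hU : ∀ i j, abv (U i j) ≤ 1)
    (hdet : abv U.det = 1) (j : Fin n) : ∃ i, abv (U i j) = 1 := by
  have hcol : stdNorm abv (fun i => U i j) = 1 :=
    le_antisymm (stdNorm_le_iff.2 ⟨zero_le_one, fun i => hU i j⟩)
      (hdet ▸ abv_det_le_stdNorm_col hna hU j)
  obtain ⟨i, hi⟩ := exists_apply_eq_stdNorm (hcol ▸ one_ne_zero)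
  exact ⟨i, hi.trans hcol⟩

end Matrix

open Matrix in
/-- Characterization of the linear isometries of `(K^n, ‖·‖)` over a
non-Archimedean valued field: they are exactly the matrices in `GL(n,D)`. -/
theorem linear_isometry_tfae
    {K : Type*} [Field K] (v : K → ℝ) (hv : IsNAV v)
    (n : ℕ) (U : Matrix (Fin n) (Fin n) K) :
    [ -- (1) `U` is a linear isometry of `(K^n, ‖·‖)`
      (∀ x : Fin n → K, stdNorm v (U.mulVec x) = stdNorm v x),
      -- (2) `|det U| = 1` and `max_i |u_ij| = 1` for every column `j`
      (v U.det = 1 ∧ ∀ j, (∀ i, v (U i j) ≤ 1) ∧ ∃ i, v (U i j) = 1),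
      -- (3) `|det U| = 1` and all entries have valuation at most 1
      (v U.det = 1 ∧ ∀ i j, v (U i j) ≤ 1),
      -- (4) `U` is invertible and all entries of `U` and `U⁻¹` have valuation at most 1
      (∃ V : Matrix (Fin n) (Fin n) K, U * V = 1 ∧ V * U = 1 ∧
        (∀ i j, v (U i j) ≤ 1) ∧ (∀ i j, v (V i j) ≤ 1)),
      -- (5) `U ∈ GL(n,D)`: entries in `D` and `det U` a unit of `D`
      ((∀ i j, v (U i j) ≤ 1) ∧ ∃ w : K, v w ≤ 1 ∧ U.det * w = 1) ].TFAE := by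
  have hna : IsNonarchimedean v := hv.add_le'
  obtain ⟨abv, rfl⟩ : ∃ abv : AbsoluteValue K ℝ, ⇑abv = v := ⟨hv.absoluteValue, rfl⟩
  tfae_have 1 → 4 := fun hU =>
    have hdet := (det_ne_zero_of_isometry hU).isUnit
    ⟨U⁻¹, mul_nonsing_inv U hdet, nonsing_inv_mul U hdet, abv_apply_le_one_of_isometry hU,
      abv_apply_le_one_of_isometry (isometry_of_mul_eq_one hU (mul_nonsing_inv U hdet))⟩
  tfae_have 4 → 1
  | ⟨V, _, hVU, hU, hV⟩, x => le_antisymm (stdNorm_mulVec_le hna hU x) <| by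
      simpa [mulVec_mulVec, hVU] using stdNorm_mulVec_le hna hV (U *ᵥ x)
  tfae_have 4 → 3
  | ⟨V, hUV, _, hU, hV⟩ => ⟨abv_det_eq_one_of_mul_eq_one hna hUV hU hV, hU⟩
  tfae_have 3 → 5
  | ⟨hdet, hU⟩ => ⟨hU, U.det⁻¹, by rw [map_inv₀, hdet, inv_one],
      mul_inv_cancel₀ fun h => by simp [h] at hdet⟩
  tfae_have 5 → 4
  | ⟨hU, w, hw, hdetw⟩ =>
    have hdet : IsUnit U.det := .of_mul_eq_one w hdetw
    ⟨U⁻¹, mul_nonsing_inv U hdet, nonsing_inv_mul U hdet, hU,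
      abv_inv_apply_le_one hna hU (eq_inv_of_mul_eq_one_right hdetw ▸ hw)⟩
  tfae_have 2 → 3
  | ⟨hdet, hcol⟩ => ⟨hdet, fun i j => (hcol j).1 i⟩
  tfae_have 3 → 2
  | ⟨hdet, hU⟩ => ⟨hdet, fun j => ⟨fun i => hU i j, exists_abv_apply_eq_one hna hU hdet j⟩⟩
  tfae_finish
end

section
/- Let (K,|·|) be a non-Archimedean valued field with residue field k, and assume ch K = 0 and ch k > 0. Consider the matrices A₀ := [[1,1],[1,2]] and A_n := [[4n²+1, 2n],[2n, 1]] for n ≥ 1, which lie in SL(2,ℤ) ⊆ SL(2,D). Then for every ε ∈ (0,1] there exists an infinite set S(ε) ⊆ ℕ such that the family {A_i}_{i∈S(ε)} is a basis of a free subgroup of SL(2,ℤ,ε). -/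
/-- The Neumann–Magnus matrices `A₀ = [[1,1],[1,2]]`, `Aₙ = [[4n²+1, 2n],[2n, 1]]`,
as elements of `SL(2,ℤ)`. -/
def magnusA (n : ℕ) : Matrix.SpecialLinearGroup (Fin 2) ℤ :=
  if n = 0 then ⟨!![1, 1; 1, 2], by simp [Matrix.det_fin_two_of]⟩
  else ⟨!![4 * (n : ℤ) ^ 2 + 1, 2 * n; 2 * n, 1], by simp [Matrix.det_fin_two_of]; ring⟩

/-!
The integers `m` with `v m < ε` form an ideal `I` of `ℤ` (by the ultrametric inequality, since
`v ≤ 1` on `ℤ`), so `SL(2,ℤ,ε)` is the principal congruence subgroup of level `I`; in particular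
it is a subgroup. `I` contains `N = p ^ M ≥ 2` for the prime `p` with `v p < 1` and `M` large,
and `A_n ∈ SL(2,ℤ,ε)` as soon as `N ∣ n ≠ 0`. Distinct nonzero multiples of `N` are at distance
at least `2`, and for such indices the `A_n` play ping-pong on nonzero vectors of `ℤ²`: `A_n`
sends every vector whose slope `x₁ / x₀` lies outside `[-2n-1, -2n+1]` to one whose slope
`x₀ / x₁` lies in `[2n-1, 2n+1]`, and `A_n⁻¹` does the reverse.
-/

open Matrix

namespace IsNAV

variable {K : Type*} [Field K] {v : K → ℝ}

def toAbsoluteValue (hv : IsNAV v) : AbsoluteValue K ℝ where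
  toFun := v
  map_mul' := hv.map_mul'
  nonneg' := hv.nonneg
  eq_zero' := hv.eq_zero_iff
  add_le' x y := (hv.add_le' x y).trans (max_le_add_of_nonneg (hv.nonneg x) (hv.nonneg y))

lemma intCast_le_one (hv : IsNAV v) (n : ℤ) : v n ≤ 1 :=
  IsNonarchimedean.apply_intCast_le_one (f := hv.toAbsoluteValue) hv.add_le'

lemma map_pow (hv : IsNAV v) (x : K) (n : ℕ) : v (x ^ n) = v x ^ n :=
  _root_.map_pow hv.toAbsoluteValue x n

def ballIdeal (hv : IsNAV v) {ε : ℝ} (hε : 0 < ε) : Ideal ℤ where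
  carrier := {n | v n < ε}
  zero_mem' := by simpa [(hv.eq_zero_iff 0).2 rfl] using hε
  add_mem' {m n} hm hn := by
    simpa using (hv.add_le' m n).trans_lt (max_lt hm hn)
  smul_mem' c n hn := by
    simpa [hv.map_mul'] using
      (mul_le_of_le_one_left (hv.nonneg _) (hv.intCast_le_one c)).trans_lt hn

lemma mem_ballIdeal (hv : IsNAV v) {ε : ℝ} (hε : 0 < ε) {n : ℤ} :
    n ∈ hv.ballIdeal hε ↔ v n < ε :=
  Iff.rfl

end IsNAV

namespace Matrix.SpecialLinearGroup

variable {n R : Type*} [Fintype n] [DecidableEq n] [CommRing R]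

def congruenceSubgroup (I : Ideal R) : Subgroup (SpecialLinearGroup n R) :=
  (map (Ideal.Quotient.mk I)).ker

lemma mem_congruenceSubgroup_iff {I : Ideal R} {g : SpecialLinearGroup n R} :
    g ∈ congruenceSubgroup I ↔
      (∀ k, (g : Matrix n n R) k k - 1 ∈ I) ∧ ∀ k l, k ≠ l → (g : Matrix n n R) k l ∈ I := by
  rw [congruenceSubgroup, MonoidHom.mem_ker, SpecialLinearGroup.ext_iff]
  simp only [map_apply_coe, RingHom.mapMatrix_apply, map_apply, coe_one, one_apply]
  constructor
  · intro h
    refine ⟨fun k => ?_, fun k l hkl => ?_⟩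
    · simpa [← Ideal.Quotient.eq] using h k k
    · simpa [hkl, Ideal.Quotient.eq_zero_iff_mem] using h k l
  · rintro ⟨hd, ho⟩ k l
    split_ifs with hkl
    · subst hkl
      simpa [← Ideal.Quotient.eq] using hd k
    · simpa [Ideal.Quotient.eq_zero_iff_mem] using ho k l hkl

end Matrix.SpecialLinearGroup

lemma IsNAV.mem_congruenceSubgroup_ballIdeal_iff {K : Type*} [Field K] {v : K → ℝ}
    (hv : IsNAV v) {ε : ℝ} (hε : 0 < ε) {n : Type*} [Fintype n] [DecidableEq n]
    {g : SpecialLinearGroup n ℤ} :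
    g ∈ SpecialLinearGroup.congruenceSubgroup (hv.ballIdeal hε) ↔
      (∀ k, v (((g : Matrix n n ℤ) k k : ℤ) - 1 : K) < ε) ∧
        ∀ k l, k ≠ l → v (((g : Matrix n n ℤ) k l : ℤ) : K) < ε := by
  simp only [SpecialLinearGroup.mem_congruenceSubgroup_iff, hv.mem_ballIdeal, Int.cast_sub,
    Int.cast_one]

lemma magnusA_mem_congruenceSubgroup {I : Ideal ℤ} {n : ℕ} (hn : n ≠ 0) (hnI : (n : ℤ) ∈ I) :
    magnusA n ∈ SpecialLinearGroup.congruenceSubgroup I := by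
  have h2n : 2 * (n : ℤ) ∈ I := I.mul_mem_left 2 hnI
  refine SpecialLinearGroup.mem_congruenceSubgroup_iff.2 ⟨fun k => ?_, fun k l hkl => ?_⟩
  · fin_cases k
    · simpa [magnusA, hn, sq, mul_assoc] using I.mul_mem_left (4 * n) hnI
    · simp [magnusA, hn]
  · fin_cases k <;> fin_cases l <;> simp [magnusA, hn, h2n] at hkl ⊢

def nonzeroVectors : SubMulAction (SpecialLinearGroup (Fin 2) ℤ) (Fin 2 → ℤ) where
  carrier := {x | x ≠ 0}
  smul_mem' g _ := (smul_ne_zero_iff_ne g).2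

@[simp]
lemma mem_nonzeroVectors {x : Fin 2 → ℤ} : x ∈ nonzeroVectors ↔ x ≠ 0 :=
  Iff.rfl

def sector (a : ℤ) (i j : Fin 2) : Set nonzeroVectors :=
  {x | |(x : Fin 2 → ℤ) i - a * (x : Fin 2 → ℤ) j| ≤ |(x : Fin 2 → ℤ) j|}

section Sector

variable {a b : ℤ} {i j : Fin 2}

lemma apply_ne_zero_of_mem_sector (hij : i ≠ j) {x : nonzeroVectors} (hx : x ∈ sector a i j) :
    (x : Fin 2 → ℤ) j ≠ 0 := by
  intro hj
  have hi : (x : Fin 2 → ℤ) i = 0 := by simpa [sector, hj] using hx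
  refine x.2 (funext fun k => ?_)
  fin_cases i <;> fin_cases j <;> fin_cases k <;> simp_all

lemma disjoint_sector (hij : i ≠ j) (hab : 2 < |a - b|) :
    Disjoint (sector a i j) (sector b i j) := by
  refine Set.disjoint_left.2 fun x hxa hxb => ?_
  have hj := abs_pos.2 (apply_ne_zero_of_mem_sector hij hxa)
  simp only [sector, Set.mem_ofPred_eq] at hxa hxb
  have : |a - b| * |(x : Fin 2 → ℤ) j| ≤ 2 * |(x : Fin 2 → ℤ) j| :=
    calc |a - b| * |(x : Fin 2 → ℤ) j|
        = |((x : Fin 2 → ℤ) i - b * (x : Fin 2 → ℤ) j) -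
            ((x : Fin 2 → ℤ) i - a * (x : Fin 2 → ℤ) j)| := by
          rw [← abs_mul]; ring_nf
      _ ≤ 2 * |(x : Fin 2 → ℤ) j| := (abs_sub _ _).trans (by linarith)
  nlinarith

lemma disjoint_sector_swap (hij : i ≠ j) (ha : 0 < a) (hb : b < 0) :
    Disjoint (sector a i j) (sector b j i) := by
  refine Set.disjoint_left.2 fun x hxa hxb => ?_
  have hi := apply_ne_zero_of_mem_sector hij.symm hxb
  have hj := apply_ne_zero_of_mem_sector hij hxa
  simp only [sector, Set.mem_ofPred_eq, ← sq_le_sq] at hxa hxb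
  have hai : 0 ≤ (a ^ 2 - 1) * (x : Fin 2 → ℤ) j ^ 2 := mul_nonneg (by nlinarith) (sq_nonneg _)
  have hbi : 0 ≤ (b ^ 2 - 1) * (x : Fin 2 → ℤ) i ^ 2 := mul_nonneg (by nlinarith) (sq_nonneg _)
  have hap : 0 < a * ((x : Fin 2 → ℤ) i * (x : Fin 2 → ℤ) j) := by
    nlinarith [sq_pos_of_ne_zero hi]
  have hbp : 0 < b * ((x : Fin 2 → ℤ) i * (x : Fin 2 → ℤ) j) := by
    nlinarith [sq_pos_of_ne_zero hj]
  nlinarith [pos_of_mul_pos_right hap ha.le]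

end Sector

lemma magnusA_smul {n : ℕ} (hn : n ≠ 0) (x : Fin 2 → ℤ) :
    magnusA n • x = ![(4 * n ^ 2 + 1) * x 0 + 2 * n * x 1, 2 * n * x 0 + x 1] := by
  rw [Matrix.SpecialLinearGroup.smul_def]
  ext k
  fin_cases k <;> simp [magnusA, hn, mulVec, dotProduct, Fin.sum_univ_two]

lemma magnusA_inv_smul {n : ℕ} (hn : n ≠ 0) (x : Fin 2 → ℤ) :
    (magnusA n)⁻¹ • x = ![x 0 - 2 * n * x 1, -(2 * n * x 0) + (4 * n ^ 2 + 1) * x 1] := by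
  rw [Matrix.SpecialLinearGroup.smul_def, Matrix.SpecialLinearGroup.coe_inv]
  ext k
  fin_cases k <;> simp [magnusA, hn, mulVec, dotProduct, Fin.sum_univ_two, adjugate_fin_two_of]
  ring

lemma magnusA_smul_mem_sector {n : ℕ} (hn : n ≠ 0) {x : nonzeroVectors}
    (hx : x ∉ sector (-2 * n) 1 0) : magnusA n • x ∈ sector (2 * n) 0 1 := by
  simp only [sector, Set.mem_ofPred_eq, not_le, SubMulAction.val_smul, magnusA_smul hn,
    cons_val_zero, cons_val_one] at hx ⊢
  ring_nf at hx ⊢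
  exact hx.le

lemma magnusA_inv_smul_mem_sector {n : ℕ} (hn : n ≠ 0) {x : nonzeroVectors}
    (hx : x ∉ sector (2 * n) 0 1) : (magnusA n)⁻¹ • x ∈ sector (-2 * n) 1 0 := by
  simp only [sector, Set.mem_ofPred_eq, not_le, SubMulAction.val_smul, magnusA_inv_smul hn,
    cons_val_zero, cons_val_one] at hx ⊢
  ring_nf at hx ⊢
  exact hx.le

theorem injective_lift_magnusA {S : Set ℕ} [Nontrivial S] (h0 : 0 ∉ S)
    (hsep : ∀ m ∈ S, ∀ n ∈ S, m < n → m + 2 ≤ n) :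
    Function.Injective (FreeGroup.lift fun i : S => magnusA i) := by
  have hne (i : S) : (i : ℕ) ≠ 0 := fun h => h0 (h ▸ i.2)
  have hgap {i j : S} (hij : i ≠ j) : 2 < |(2 * i : ℤ) - 2 * j| ∧ 2 < |(-2 * i : ℤ) - -2 * j| := by
    rcases (Subtype.coe_ne_coe.2 hij).lt_or_gt with h | h
    · have := hsep i i.2 j j.2 h
      exact ⟨lt_abs.2 (Or.inr (by omega)), lt_abs.2 (Or.inl (by omega))⟩
    · have := hsep j j.2 i i.2 h
      exact ⟨lt_abs.2 (Or.inl (by omega)), lt_abs.2 (Or.inr (by omega))⟩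
  refine FreeGroup.injective_lift_of_ping_pong _ (fun i => sector (2 * (i : ℕ)) 0 1)
    (fun i => sector (-2 * (i : ℕ)) 1 0) (fun i => ⟨⟨![2 * i, 1], by simp⟩, by simp [sector]⟩)
    (fun i j hij => disjoint_sector (by decide) (hgap hij).1)
    (fun i j hij => disjoint_sector (by decide) (hgap hij).2)
    (fun i j => disjoint_sector_swap (by decide) (by have := hne i; omega)
      (by have := hne j; omega))
    ?_ ?_
  · rintro i _ ⟨x, hx, rfl⟩
    exact magnusA_smul_mem_sector (hne i) hx
  · rintro i _ ⟨x, hx, rfl⟩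
    exact magnusA_inv_smul_mem_sector (hne i) hx

theorem magnus_free_subgroup_in_SL2eps_general
    {K : Type*} [Field K] (v : K → ℝ) (hv : IsNAV v)
    -- `ch k > 0`: some prime has residue zero
    (hresidue : ∃ p : ℕ, p.Prime ∧ v (p : K) < 1)
    (ε : ℝ) (hε : 0 < ε) :
    ∃ S : Set ℕ, S.Infinite ∧
      -- each `A_i`, `i ∈ S`, lies in `SL(2,ℤ,ε)`
      (∀ i ∈ S, (∀ k : Fin 2, v ((((magnusA i : Matrix.SpecialLinearGroup (Fin 2) ℤ) :
          Matrix (Fin 2) (Fin 2) ℤ) k k : ℤ) - 1 : K) < ε) ∧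
        (∀ k l : Fin 2, k ≠ l → v ((((magnusA i : Matrix.SpecialLinearGroup (Fin 2) ℤ) :
          Matrix (Fin 2) (Fin 2) ℤ) k l : ℤ) : K) < ε)) ∧
      -- the subgroup generated by `{A_i}_{i ∈ S}` lies in `SL(2,ℤ,ε)` …
      (∀ w : FreeGroup S,
        (∀ k : Fin 2, v ((((FreeGroup.lift (fun i : S => magnusA (i : ℕ)) w :
            Matrix.SpecialLinearGroup (Fin 2) ℤ) : Matrix (Fin 2) (Fin 2) ℤ) k k : ℤ) - 1 : K) < ε) ∧
        (∀ k l : Fin 2, k ≠ l → v ((((FreeGroup.lift (fun i : S => magnusA (i : ℕ)) w :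
            Matrix.SpecialLinearGroup (Fin 2) ℤ) : Matrix (Fin 2) (Fin 2) ℤ) k l : ℤ) : K) < ε)) ∧
      -- … and `{A_i}_{i ∈ S}` is a basis of a free subgroup
      Function.Injective
        (FreeGroup.lift (fun i : S => magnusA (i : ℕ)) :
          FreeGroup S →* Matrix.SpecialLinearGroup (Fin 2) ℤ) := by
  obtain ⟨p, hp, hvp⟩ := hresidue
  obtain ⟨M, hM, hM0⟩ : ∃ M, v (p : K) ^ M < ε ∧ 0 < M :=
    (((tendsto_pow_atTop_nhds_zero_of_lt_one (hv.nonneg _) hvp).eventually (gt_mem_nhds hε)).and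
      (Filter.eventually_gt_atTop 0)).exists
  have hpM : ((p ^ M : ℕ) : ℤ) ∈ hv.ballIdeal hε := by
    rw [hv.mem_ballIdeal]
    push_cast
    rwa [hv.map_pow]
  have hpM2 : 2 ≤ p ^ M := Nat.one_lt_pow hM0.ne' hp.one_lt
  set S : Set ℕ := {n | n ≠ 0 ∧ p ^ M ∣ n}
  have hS : S.Infinite := Set.infinite_of_forall_exists_gt fun a =>
    ⟨p ^ M * (a + 1), ⟨by positivity, dvd_mul_right _ _⟩, by nlinarith⟩
  have hgen (n : ℕ) (hn : n ∈ S) :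
      magnusA n ∈ SpecialLinearGroup.congruenceSubgroup (hv.ballIdeal hε) :=
    magnusA_mem_congruenceSubgroup hn.1 (Ideal.mem_of_dvd _ (Int.natCast_dvd_natCast.2 hn.2) hpM)
  have := hS.to_subtype
  refine ⟨S, hS, fun i hi => (hv.mem_congruenceSubgroup_ballIdeal_iff hε).1 (hgen i hi),
    fun w => (hv.mem_congruenceSubgroup_ballIdeal_iff hε).1
      (FreeGroup.range_lift_le (by rintro _ ⟨i, rfl⟩; exact hgen i i.2) ⟨w, rfl⟩),
    injective_lift_magnusA (fun h => h.1 rfl) ?_⟩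
  rintro m ⟨-, hm⟩ n ⟨-, hn⟩ hmn
  have := Nat.le_of_dvd (Nat.sub_pos_of_lt hmn) (Nat.dvd_sub hn hm)
  omega

/-- If `ch K = 0` and the residue characteristic is positive, then for
every `ε ∈ (0,1]` there is an infinite set `S(ε) ⊆ ℕ` such that the corresponding
Neumann–Magnus matrices form a basis of a free subgroup of `SL(2,ℤ,ε)`. -/
theorem magnus_free_subgroup_in_SL2eps
    {K : Type*} [Field K] (v : K → ℝ) (hv : IsNAV v)
    -- `ch K = 0`
    (hchar : ringChar K = 0)
    -- `ch k > 0`: some prime has residue zero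
    (hresidue : ∃ p : ℕ, p.Prime ∧ v (p : K) < 1)
    (ε : ℝ) (hε : 0 < ε) (hε1 : ε ≤ 1) :
    ∃ S : Set ℕ, S.Infinite ∧
      -- each `A_i`, `i ∈ S`, lies in `SL(2,ℤ,ε)`
      (∀ i ∈ S, (∀ k : Fin 2, v ((((magnusA i : Matrix.SpecialLinearGroup (Fin 2) ℤ) :
          Matrix (Fin 2) (Fin 2) ℤ) k k : ℤ) - 1 : K) < ε) ∧
        (∀ k l : Fin 2, k ≠ l → v ((((magnusA i : Matrix.SpecialLinearGroup (Fin 2) ℤ) :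
          Matrix (Fin 2) (Fin 2) ℤ) k l : ℤ) : K) < ε)) ∧
      -- the subgroup generated by `{A_i}_{i ∈ S}` lies in `SL(2,ℤ,ε)` …
      (∀ w : FreeGroup S,
        (∀ k : Fin 2, v ((((FreeGroup.lift (fun i : S => magnusA (i : ℕ)) w :
            Matrix.SpecialLinearGroup (Fin 2) ℤ) : Matrix (Fin 2) (Fin 2) ℤ) k k : ℤ) - 1 : K) < ε) ∧
        (∀ k l : Fin 2, k ≠ l → v ((((FreeGroup.lift (fun i : S => magnusA (i : ℕ)) w :
            Matrix.SpecialLinearGroup (Fin 2) ℤ) : Matrix (Fin 2) (Fin 2) ℤ) k l : ℤ) : K) < ε)) ∧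
      -- … and `{A_i}_{i ∈ S}` is a basis of a free subgroup
      Function.Injective
        (FreeGroup.lift (fun i : S => magnusA (i : ℕ)) :
          FreeGroup S →* Matrix.SpecialLinearGroup (Fin 2) ℤ) :=
  magnus_free_subgroup_in_SL2eps_general v hv hresidue ε hε
end

section
/- Let K be a field with ch K = p > 0 and let A, B ∈ SL(2,K) be such that the homomorphism ρ_{A,B} : F₂ → SL(2,K) is injective. Then tr(ρ_{A,B}(g)) ≠ 2 for every g ∈ F₂ with g ≠ 1. Consequently, every free subgroup of rank two of SL(2,K) acts on K² \ {0} without nontrivial fixed points. -/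
/-!
By Cayley–Hamilton, an element `M` of `SL(2,R)` with trace `2` satisfies `(M - 1)^2 = 0`. In
characteristic `p` the binomial theorem gives `M^p - 1 = (M - 1)^p = 0`, so `M` has order
dividing `p`; a faithful image of the torsion-free group `F₂` has no such nontrivial element.
A nonzero fixed vector of `M` makes `det (M - 1) = det M - tr M + 1` vanish, forcing `tr M = 2`.
-/

theorem pow_char_eq_one_of_sub_one_sq_eq_zero {R : Type*} [Ring R] (p : ℕ) [Fact p.Prime]
    [CharP R p] {x : R} (hx : (x - 1) ^ 2 = 0) : x ^ p = 1 := by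
  have hp : 2 ≤ p := (Fact.out : p.Prime).two_le
  rw [← sub_eq_zero, ← one_pow p, ← sub_pow_char_of_commute p (Commute.one_right x),
    ← Nat.sub_add_cancel hp, pow_add, hx, mul_zero]

namespace Matrix

variable {R : Type*} [CommRing R]

theorem sub_one_sq_eq_zero_of_det_eq_one_of_trace_eq_two [Nontrivial R]
    {M : Matrix (Fin 2) (Fin 2) R} (hdet : M.det = 1) (htr : M.trace = 2) : (M - 1) ^ 2 = 0 := by
  have hCH := M.aeval_self_charpoly
  rw [charpoly_fin_two, hdet, htr] at hCH
  simp only [map_one, map_add, Polynomial.aeval_sub, map_pow, Polynomial.aeval_X, map_mul,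
    Polynomial.aeval_C] at hCH
  rw [← hCH, map_ofNat]
  noncomm_ring

theorem trace_eq_two_of_mulVec_eq_self [IsDomain R] {M : Matrix (Fin 2) (Fin 2) R}
    (hdet : M.det = 1) {x : Fin 2 → R} (hx : x ≠ 0) (hfix : M *ᵥ x = x) : M.trace = 2 := by
  have hsing : (M - 1).det = 0 :=
    exists_mulVec_eq_zero_iff.mp ⟨x, hx, by rw [sub_mulVec, hfix, one_mulVec, sub_self]⟩
  rw [det_fin_two] at hdet hsing
  rw [trace_fin_two]
  simp only [sub_apply, one_apply_eq, one_apply_ne zero_ne_one, one_apply_ne one_ne_zero] at hsing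
  linear_combination hdet - hsing

namespace SpecialLinearGroup

variable [Nontrivial R]

theorem pow_char_eq_one_of_trace_eq_two (p : ℕ) [Fact p.Prime] [CharP R p]
    {M : SpecialLinearGroup (Fin 2) R} (htr : (M : Matrix (Fin 2) (Fin 2) R).trace = 2) :
    M ^ p = 1 :=
  Subtype.ext <| (coe_pow M p).trans <| pow_char_eq_one_of_sub_one_sq_eq_zero p <|
    sub_one_sq_eq_zero_of_det_eq_one_of_trace_eq_two M.prop htr

theorem trace_ne_two_of_injective {G : Type*} [Group G] [IsMulTorsionFree G]
    (p : ℕ) [Fact p.Prime] [CharP R p] {ρ : G →* SpecialLinearGroup (Fin 2) R}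
    (hρ : Function.Injective ρ) {g : G} (hg : g ≠ 1) :
    ((ρ g : SpecialLinearGroup (Fin 2) R) : Matrix (Fin 2) (Fin 2) R).trace ≠ 2 := by
  intro htr
  have hgp : ρ (g ^ p) = ρ 1 := by rw [map_pow, map_one, pow_char_eq_one_of_trace_eq_two p htr]
  exact hg ((pow_eq_one_iff_left (Fact.out : p.Prime).ne_zero).mp (hρ hgp))

end SpecialLinearGroup

end Matrix

/-- In positive characteristic, a faithful representation
`ρ_{A,B} : F₂ → SL(2,K)` has no nonidentity element of trace `2`; consequently every free
subgroup of rank two of `SL(2,K)` acts on `K² \ {0}` without nontrivial fixed points. -/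
theorem faithful_rep_trace_ne_two_pos_char
    {K : Type*} [Field K] (p : ℕ) (hp : p ≠ 0) (hchar : CharP K p)
    (A B : Matrix.SpecialLinearGroup (Fin 2) K)
    -- `ρ_{A,B}` is injective (faithful)
    (hinj : Function.Injective
      (FreeGroup.lift (fun b : Bool => if b then A else B) :
        FreeGroup Bool →* Matrix.SpecialLinearGroup (Fin 2) K)) :
    -- `tr (ρ_{A,B} g) ≠ 2` for `g ≠ 1`
    (∀ g : FreeGroup Bool, g ≠ 1 →
      Matrix.trace ((FreeGroup.lift (fun b : Bool => if b then A else B) g :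
        Matrix.SpecialLinearGroup (Fin 2) K) : Matrix (Fin 2) (Fin 2) K) ≠ 2) ∧
    -- the free subgroup `⟨A,B⟩` acts on `K² \ {0}` without nontrivial fixed points
    (∀ g : FreeGroup Bool, g ≠ 1 → ∀ x : Fin 2 → K, x ≠ 0 →
      ((FreeGroup.lift (fun b : Bool => if b then A else B) g :
        Matrix.SpecialLinearGroup (Fin 2) K) : Matrix (Fin 2) (Fin 2) K).mulVec x ≠ x) := by
  have : Fact p.Prime := ⟨CharP.char_prime_of_ne_zero K hp⟩
  have htrace := fun g (hg : g ≠ 1) =>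
    Matrix.SpecialLinearGroup.trace_ne_two_of_injective p hinj hg
  exact ⟨htrace, fun g hg x hx hfix =>
    htrace g hg (Matrix.trace_eq_two_of_mulVec_eq_self (Matrix.SpecialLinearGroup.det_coe _)
      hx hfix)⟩
end

section
/- For every element w of the free group F₂ on generators a, b there exists a polynomial P_w ∈ ℤ[X,Y,Z], depending only on the conjugacy class of w, such that for every field K and all matrices A, B ∈ SL(2,K): tr(ρ_{A,B}(w)) = P_w(tr A, tr B, tr(AB)), where the integer coefficients of P_w are interpreted in K via the canonical ring homomorphism ℤ → K. Moreover one can take P_{1} = 2, P_a = X, P_b = Y and P_{ab} = Z. -/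
/-!
Over any commutative ring, `A ∈ SL(2)` satisfies `A² = (tr A) A - 1` and `A⁻¹ = tr A - A`, and
any two `2 × 2` matrices satisfy `AB + BA = (tr AB - tr A tr B) + (tr B) A + (tr A) B`. So the
span of `1, A, B, AB` is stable under left multiplication by `A^{±1}` and `B^{±1}`, with
structure constants that are integer polynomials in `x = tr A`, `y = tr B`, `z = tr AB`; by
induction every `ρ_{A,B}(w)` has polynomial coordinates in `1, A, B, AB`, and taking traces gives
a trace polynomial. Trace polynomials are unique: over an algebraically closed field every triple
`(x, y, z)` is the trace triple of some pair `(A, B)`, so one may take `x, y, z` algebraically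
independent. Uniqueness yields conjugation invariance and the normalizations.
-/

open MvPolynomial
open scoped MatrixGroups

universe u

section TraceRelations

open Matrix

variable {K : Type*} [CommRing K]

theorem Matrix.adjugate_fin_two_eq_trace_smul_sub (A : Matrix (Fin 2) (Fin 2) K) :
    adjugate A = trace A • 1 - A := by
  ext i j
  fin_cases i <;> fin_cases j <;> simp [adjugate_fin_two, trace_fin_two]

theorem Matrix.mul_add_mul_swap_fin_two (A B : Matrix (Fin 2) (Fin 2) K) :
    A * B + B * A = (trace (A * B) - trace A * trace B) • 1 + trace B • A + trace A • B := by
  ext i j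
  fin_cases i <;> fin_cases j <;>
    simp [Matrix.mul_apply, Fin.sum_univ_two, trace_fin_two] <;> ring

namespace Matrix.SpecialLinearGroup

theorem coe_inv_fin_two (A : SL(2, K)) : ((A⁻¹ : SL(2, K)) : Matrix (Fin 2) (Fin 2) K) =
    trace (A : Matrix (Fin 2) (Fin 2) K) • 1 - A := by
  rw [coe_inv, adjugate_fin_two_eq_trace_smul_sub]

theorem mul_self_fin_two (A : SL(2, K)) : (A * A : Matrix (Fin 2) (Fin 2) K) =
    trace (A : Matrix (Fin 2) (Fin 2) K) • (A : Matrix (Fin 2) (Fin 2) K) - 1 := by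
  have h : ((A * A⁻¹ : SL(2, K)) : Matrix (Fin 2) (Fin 2) K) = 1 := by
    rw [mul_inv_cancel, coe_one]
  rw [coe_mul, coe_inv_fin_two, mul_sub, mul_smul_comm, mul_one] at h
  rw [← h, sub_sub_cancel]

theorem exists_trace_eq_fin_two {L : Type*} [Field L] [IsAlgClosed L]
    (x y z : L) :
    ∃ A B : SL(2, L), trace (A : Matrix (Fin 2) (Fin 2) L) = x ∧
      trace (B : Matrix (Fin 2) (Fin 2) L) = y ∧
      trace ((A : Matrix (Fin 2) (Fin 2) L) * (B : Matrix (Fin 2) (Fin 2) L)) = z := by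
  have hdeg : (Polynomial.X ^ 2 - Polynomial.C z * Polynomial.X + 1).degree = 2 := by
    compute_degree!
  obtain ⟨t, ht⟩ := IsAlgClosed.exists_root _ (hdeg ▸ two_ne_zero)
  simp only [Polynomial.IsRoot, Polynomial.eval_add, Polynomial.eval_sub, Polynomial.eval_mul,
    Polynomial.eval_pow, Polynomial.eval_C, Polynomial.eval_X, Polynomial.eval_one] at ht
  refine ⟨⟨!![x, -1; 1, 0], by simp [det_fin_two]⟩,
    ⟨!![0, t; t - z, y], by rw [det_fin_two_of]; linear_combination -ht⟩, ?_, ?_, ?_⟩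
  all_goals simp [trace_fin_two]

end Matrix.SpecialLinearGroup

end TraceRelations

theorem exists_isAlgClosed_algebraicIndependent (ι : Type u) :
    ∃ (K : Type u) (_ : Field K) (_ : IsAlgClosed K) (x : ι → K),
      AlgebraicIndependent ℤ x := by
  let R := MvPolynomial ι ℤ
  -- stated for an arbitrary `L` so that `ℤ` acts through `Ring.toIntAlgebra`, as in the goal
  have hX (L : Type u) [Field L] [Algebra R L] (h : Function.Injective (algebraMap R L)) :
      AlgebraicIndependent ℤ fun i => algebraMap R L (X i) :=
    (algebraicIndependent_X ι ℤ).map' (f := (algebraMap R L).toIntAlgHom) h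
  let K := AlgebraicClosure (FractionRing R)
  refine ⟨K, inferInstance, inferInstance, _, hX K ?_⟩
  rw [IsScalarTower.algebraMap_eq R (FractionRing R) K]
  exact (algebraMap (FractionRing R) K).injective.comp (IsFractionRing.injective R _)

section Coordinates

variable {S M : Type*} [CommRing S] [Ring M] [Algebra S M]

def combAB (A B : M) (c : Fin 4 → S) : M := c 0 • 1 + c 1 • A + c 2 • B + c 3 • (A * B)

def leftMulA (x : S) (c : Fin 4 → S) : Fin 4 → S :=
  ![-c 1, c 0 + x * c 1, -c 3, c 2 + x * c 3]

def leftMulB (x y z : S) (c : Fin 4 → S) : Fin 4 → S :=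
  ![(z - x * y) * c 1 - c 2 - x * c 3, y * c 1 + c 3, c 0 + x * c 1 + y * c 2 + z * c 3, -c 1]

def traceForm (x y z : S) (c : Fin 4 → S) : S := 2 * c 0 + x * c 1 + y * c 2 + z * c 3

variable {A B : M}

theorem combAB_smul_sub (s : S) (c d : Fin 4 → S) :
    combAB A B (s • c - d) = s • combAB A B c - combAB A B d := by
  simp only [combAB, Pi.sub_apply, Pi.smul_apply, smul_eq_mul]
  module

theorem mul_combAB_of_mul_self {x : S} (hA : A * A = x • A - 1) (c : Fin 4 → S) :
    A * combAB A B c = combAB A B (leftMulA x c) := by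
  have hAAB : A * (A * B) = x • (A * B) - B := by
    rw [← mul_assoc, hA, sub_mul, smul_mul_assoc, one_mul]
  simp only [combAB, leftMulA, mul_add, mul_smul_comm, mul_one, hA, hAAB, Matrix.cons_val_zero,
    Matrix.cons_val_one, Matrix.cons_val, neg_smul]
  module

theorem mul_combAB_of_mul_add_mul {x y z : S} (hB : B * B = y • B - 1)
    (hAB : A * B + B * A = (z - x * y) • 1 + y • A + x • B) (c : Fin 4 → S) :
    B * combAB A B c = combAB A B (leftMulB x y z c) := by
  have hBA : B * A = (z - x * y) • 1 + y • A + x • B - A * B := eq_sub_of_add_eq' hAB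
  have hBAB : B * (A * B) = A + z • B - x • 1 := by
    rw [← mul_assoc, hBA]
    simp only [sub_mul, add_mul, smul_mul_assoc, one_mul, mul_assoc, hB, mul_sub, mul_smul_comm,
      mul_one]
    module
  simp only [combAB, leftMulB, mul_add, mul_smul_comm, mul_one, hB, hBA, hBAB,
    Matrix.cons_val_zero, Matrix.cons_val_one, Matrix.cons_val, neg_smul]
  module

theorem trace_combAB {K : Type*} [CommRing K] (A B : Matrix (Fin 2) (Fin 2) K) (c : Fin 4 → K) :
    (combAB A B c).trace = traceForm A.trace B.trace (A * B).trace c := by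
  simp only [combAB, traceForm, Matrix.trace_add, Matrix.trace_smul, Matrix.trace_one,
    Fintype.card_fin, Nat.cast_ofNat, smul_eq_mul]
  ring

variable {T F : Type*} [CommRing T] [FunLike F S T] [RingHomClass F S T]

theorem comp_leftMulA (f : F) (x : S) (c : Fin 4 → S) :
    f ∘ leftMulA x c = leftMulA (f x) (f ∘ c) := by
  ext i
  fin_cases i <;> simp [leftMulA]

theorem comp_leftMulB (f : F) (x y z : S) (c : Fin 4 → S) :
    f ∘ leftMulB x y z c = leftMulB (f x) (f y) (f z) (f ∘ c) := by
  ext i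
  fin_cases i <;> simp [leftMulB]

theorem map_traceForm (f : F) (x y z : S) (c : Fin 4 → S) :
    f (traceForm x y z c) = traceForm (f x) (f y) (f z) (f ∘ c) := by
  simp [traceForm, map_ofNat]

end Coordinates

section TracePolynomials

variable {K : Type*} [CommRing K]

def pairLift {G : Type*} [Group G] (A B : G) : FreeGroup Bool →* G :=
  FreeGroup.lift fun b => if b then A else B

@[simp]
theorem pairLift_of_true {G : Type*} [Group G] (A B : G) : pairLift A B (.of true) = A := by
  simp [pairLift]

@[simp]
theorem pairLift_of_false {G : Type*} [Group G] (A B : G) : pairLift A B (.of false) = B := by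
  simp [pairLift]

def traceEval (A B : SL(2, K)) : MvPolynomial (Fin 3) ℤ →ₐ[ℤ] K :=
  aeval ![Matrix.trace (A : Matrix (Fin 2) (Fin 2) K), Matrix.trace (B : Matrix (Fin 2) (Fin 2) K),
    Matrix.trace ((A : Matrix (Fin 2) (Fin 2) K) * (B : Matrix (Fin 2) (Fin 2) K))]

@[simp]
theorem traceEval_X_zero (A B : SL(2, K)) :
    traceEval A B (X 0) = Matrix.trace (A : Matrix (Fin 2) (Fin 2) K) := by
  simp [traceEval]

@[simp]
theorem traceEval_X_one (A B : SL(2, K)) :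
    traceEval A B (X 1) = Matrix.trace (B : Matrix (Fin 2) (Fin 2) K) := by
  simp [traceEval]

@[simp]
theorem traceEval_X_two (A B : SL(2, K)) : traceEval A B (X 2) =
    Matrix.trace ((A : Matrix (Fin 2) (Fin 2) K) * (B : Matrix (Fin 2) (Fin 2) K)) := by
  simp [traceEval]

def IsTracePoly (w : FreeGroup Bool) (p : MvPolynomial (Fin 3) ℤ) : Prop :=
  ∀ (K : Type u) [CommRing K] (A B : SL(2, K)),
    Matrix.trace (pairLift A B w : Matrix (Fin 2) (Fin 2) K) = traceEval A B p

def HasTraceCoords (w : FreeGroup Bool) (c : Fin 4 → MvPolynomial (Fin 3) ℤ) : Prop :=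
  ∀ (K : Type u) [CommRing K] (A B : SL(2, K)),
    (pairLift A B w : Matrix (Fin 2) (Fin 2) K) =
      combAB (A : Matrix (Fin 2) (Fin 2) K) B (traceEval A B ∘ c)

theorem isTracePoly_one : IsTracePoly.{u} 1 2 := fun K _ A B => by
  simp [map_ofNat]

theorem isTracePoly_of_true : IsTracePoly.{u} (.of true) (X 0) := fun K _ A B => by
  simp

theorem isTracePoly_of_false : IsTracePoly.{u} (.of false) (X 1) := fun K _ A B => by
  simp

theorem isTracePoly_of_true_mul_of_false : IsTracePoly.{u} (.of true * .of false) (X 2) :=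
  fun K _ A B => by simp

theorem IsTracePoly.conj {w : FreeGroup Bool} {p : MvPolynomial (Fin 3) ℤ}
    (hp : IsTracePoly.{u} w p) (g : FreeGroup Bool) : IsTracePoly.{u} (g * w * g⁻¹) p :=
  fun K _ A B => by
    rw [← hp K A B, map_mul, map_mul, map_inv, Matrix.SpecialLinearGroup.coe_mul,
      Matrix.trace_mul_comm, ← Matrix.SpecialLinearGroup.coe_mul, inv_mul_cancel_left]

namespace HasTraceCoords

variable {w : FreeGroup Bool} {c : Fin 4 → MvPolynomial (Fin 3) ℤ}

theorem isTracePoly (hc : HasTraceCoords.{u} w c) :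
    IsTracePoly.{u} w (traceForm (X 0) (X 1) (X 2) c) := fun K _ A B => by
  rw [hc K A B, trace_combAB, map_traceForm, traceEval_X_zero, traceEval_X_one, traceEval_X_two]

theorem of_true_mul (hc : HasTraceCoords.{u} w c) :
    HasTraceCoords.{u} (.of true * w) (leftMulA (X 0) c) := fun K _ A B => by
  rw [map_mul, Matrix.SpecialLinearGroup.coe_mul, hc K A B, pairLift_of_true,
    mul_combAB_of_mul_self (Matrix.SpecialLinearGroup.mul_self_fin_two A), comp_leftMulA,
    traceEval_X_zero]

theorem of_false_mul (hc : HasTraceCoords.{u} w c) :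
    HasTraceCoords.{u} (.of false * w) (leftMulB (X 0) (X 1) (X 2) c) := fun K _ A B => by
  rw [map_mul, Matrix.SpecialLinearGroup.coe_mul, hc K A B, pairLift_of_false,
    mul_combAB_of_mul_add_mul (Matrix.SpecialLinearGroup.mul_self_fin_two B)
      (Matrix.mul_add_mul_swap_fin_two _ _), comp_leftMulB, traceEval_X_zero, traceEval_X_one,
    traceEval_X_two]

theorem exists_of_mul (hc : HasTraceCoords.{u} w c) (b : Bool) :
    ∃ d, HasTraceCoords.{u} (.of b * w) d := by
  cases b
  exacts [⟨_, hc.of_false_mul⟩, ⟨_, hc.of_true_mul⟩]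

/-- `ρ(g⁻¹w) = tr ρ(g) • ρ(w) - ρ(gw)`, as `A⁻¹ = tr A - A` in `SL(2)`. -/
theorem inv_mul {g : FreeGroup Bool} {p : MvPolynomial (Fin 3) ℤ}
    {d : Fin 4 → MvPolynomial (Fin 3) ℤ} (hg : IsTracePoly.{u} g p)
    (hc : HasTraceCoords.{u} w c) (hd : HasTraceCoords.{u} (g * w) d) :
    HasTraceCoords.{u} (g⁻¹ * w) (p • c - d) := fun K _ A B => by
  rw [map_mul, map_inv, Matrix.SpecialLinearGroup.coe_mul,
    Matrix.SpecialLinearGroup.coe_inv_fin_two, sub_mul, smul_mul_assoc, one_mul,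
    ← Matrix.SpecialLinearGroup.coe_mul, ← map_mul, hg K A B, hc K A B, hd K A B,
    ← combAB_smul_sub]
  congr 1
  ext i
  simp

end HasTraceCoords

theorem exists_hasTraceCoords (w : FreeGroup Bool) : ∃ c, HasTraceCoords.{u} w c := by
  have hw : w ∈ Subgroup.closure (Set.range FreeGroup.of) := by
    rw [FreeGroup.closure_range_of]
    exact Subgroup.mem_top w
  induction hw using Subgroup.closure_induction_left with
  | one => exact ⟨![1, 0, 0, 0], fun K _ A B => by simp [combAB]⟩
  | mul_left _ hg _ _ hw =>
    obtain ⟨b, rfl⟩ := hg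
    obtain ⟨c, hc⟩ := hw
    exact hc.exists_of_mul b
  | inv_mul_cancel _ hg _ _ hw =>
    obtain ⟨b, rfl⟩ := hg
    obtain ⟨c, hc⟩ := hw
    obtain ⟨d, hd⟩ := hc.exists_of_mul b
    cases b
    exacts [⟨_, hc.inv_mul isTracePoly_of_false hd⟩, ⟨_, hc.inv_mul isTracePoly_of_true hd⟩]

theorem exists_isTracePoly (w : FreeGroup Bool) : ∃ p, IsTracePoly.{u} w p :=
  let ⟨_, hc⟩ := exists_hasTraceCoords w
  ⟨_, hc.isTracePoly⟩

theorem IsTracePoly.unique {w : FreeGroup Bool} {p q : MvPolynomial (Fin 3) ℤ}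
    (hp : IsTracePoly.{u} w p) (hq : IsTracePoly.{u} w q) : p = q := by
  -- `ULift` puts the generic field in `Type u`, where `hp` and `hq` can be evaluated
  obtain ⟨K, _, _, x, hx⟩ := exists_isAlgClosed_algebraicIndependent (ULift.{u} (Fin 3))
  obtain ⟨A, B, hA, hB, hAB⟩ :=
    Matrix.SpecialLinearGroup.exists_trace_eq_fin_two (x ⟨0⟩) (x ⟨1⟩) (x ⟨2⟩)
  have heval : traceEval A B = aeval (x ∘ ULift.up) := by
    rw [traceEval, hA, hB, hAB]
    congr 1
    ext i
    fin_cases i <;> rfl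
  have hinj : Function.Injective (traceEval A B) := by
    rw [heval]
    exact hx.comp ULift.up ULift.up_injective
  exact hinj ((hp K A B).symm.trans (hq K A B))

end TracePolynomials

/-- For every `w ∈ F₂` there is a trace polynomial
`P_w ∈ ℤ[X,Y,Z]`, constant on conjugacy classes, with
`tr (ρ_{A,B} w) = P_w (tr A, tr B, tr AB)` for all fields `K` and all `A, B ∈ SL(2,K)`;
moreover `P_1 = 2`, `P_a = X`, `P_b = Y`, `P_{ab} = Z`. -/
theorem trace_polynomials_exist :
    ∃ P : FreeGroup Bool → MvPolynomial (Fin 3) ℤ,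
      -- `P_w` depends only on the conjugacy class of `w`
      (∀ w u : FreeGroup Bool, P (u * w * u⁻¹) = P w) ∧
      -- the trace identity, for every field `K` and all `A, B ∈ SL(2,K)`
      (∀ (K : Type u) (_ : Field K) (A B : Matrix.SpecialLinearGroup (Fin 2) K)
          (w : FreeGroup Bool),
        Matrix.trace ((FreeGroup.lift (fun b : Bool => if b then A else B) w :
          Matrix.SpecialLinearGroup (Fin 2) K) : Matrix (Fin 2) (Fin 2) K) =
        MvPolynomial.aeval
          ![Matrix.trace (A : Matrix (Fin 2) (Fin 2) K),
            Matrix.trace (B : Matrix (Fin 2) (Fin 2) K),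
            Matrix.trace ((A : Matrix (Fin 2) (Fin 2) K) * (B : Matrix (Fin 2) (Fin 2) K))]
          (P w)) ∧
      -- the normalizations
      P 1 = 2 ∧
      P (FreeGroup.of true) = MvPolynomial.X 0 ∧
      P (FreeGroup.of false) = MvPolynomial.X 1 ∧
      P (FreeGroup.of true * FreeGroup.of false) = MvPolynomial.X 2 := by
  choose P hP using exists_isTracePoly.{u}
  exact ⟨P, fun w g => ((hP w).conj g).unique (hP _) |>.symm, fun K _ A B w => hP w K A B,
    (hP 1).unique isTracePoly_one, (hP _).unique isTracePoly_of_true,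
    (hP _).unique isTracePoly_of_false, (hP _).unique isTracePoly_of_true_mul_of_false⟩
end
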